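/- arXiv:2502.06804 — 2 statements merged into one kernel-verified Lean document; each statement's English description precedes it below -/
import Mathlib

section
/- For every real number r ≥ 0, the number of lattice points in the closed disk of radius r centered at the origin satisfies |C(r) − πr²| < 2√2·π·r + 2π. -/
noncomputable def C (r : ℝ) : ℕ :=
  Nat.card {p : ℤ × ℤ // (p.1 : ℝ) ^ 2 + (p.2 : ℝ) ^ 2 ≤ r ^ 2}

/-!
Send each point of the plane to its nearest lattice point. The fibres of this map are unit
squares, so it pushes Lebesgue measure forward to counting measure, and it moves no point by more
than `√2 / 2`. The lattice points of the disk of radius `r` are therefore counted by the area of a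
region squeezed between the disks of radii `r ± √2 / 2`, whence
`π (r - √2 / 2)² ≤ C r ≤ π (r + √2 / 2)²`.
-/

open MeasureTheory Metric

def latticePoint (p : ℤ × ℤ) : ℂ := ⟨p.1, p.2⟩

noncomputable def nearestLatticePoint (z : ℂ) : ℤ × ℤ := (round z.re, round z.im)

lemma dist_latticePoint_nearestLatticePoint_le (z : ℂ) :
    dist z (latticePoint (nearestLatticePoint z)) ≤ √2 / 2 := by
  have hround (x : ℝ) : (x - round x) ^ 2 ≤ (1 / 2) ^ 2 :=
    sq_le_sq.2 ((abs_sub_round x).trans (le_abs_self _))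
  rw [Complex.dist_eq_re_im, Real.sqrt_le_iff, div_pow, Real.sq_sqrt zero_le_two]
  refine ⟨by positivity, ?_⟩
  simp only [latticePoint, nearestLatticePoint]
  linarith [hround z.re, hround z.im]

lemma nearestLatticePoint_preimage_singleton (p : ℤ × ℤ) :
    nearestLatticePoint ⁻¹' {p} = Complex.measurableEquivRealProd ⁻¹'
      (Set.Ico (p.1 - 1 / 2 : ℝ) (p.1 + 1 / 2) ×ˢ Set.Ico (p.2 - 1 / 2 : ℝ) (p.2 + 1 / 2)) := by
  ext z
  simp [nearestLatticePoint, Prod.ext_iff, round_eq_iff]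

lemma volume_nearestLatticePoint_preimage_singleton (p : ℤ × ℤ) :
    volume (nearestLatticePoint ⁻¹' {p}) = 1 := by
  rw [nearestLatticePoint_preimage_singleton,
    Complex.volume_preserving_equiv_real_prod.measure_preimage
      (measurableSet_Ico.prod measurableSet_Ico).nullMeasurableSet,
    Measure.volume_eq_prod, Measure.prod_prod, Real.volume_Ico, Real.volume_Ico]
  norm_num

lemma measurable_nearestLatticePoint : Measurable nearestLatticePoint :=
  measurable_to_countable' fun p => by
    rw [nearestLatticePoint_preimage_singleton]
    exact Complex.measurableEquivRealProd.measurable (measurableSet_Ico.prod measurableSet_Ico)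

lemma map_nearestLatticePoint_volume :
    volume.map nearestLatticePoint = Measure.count := by
  refine Measure.ext_iff_singleton.2 fun p => ?_
  rw [Measure.map_apply measurable_nearestLatticePoint (measurableSet_singleton p),
    volume_nearestLatticePoint_preimage_singleton, Measure.count_singleton]

lemma volume_nearestLatticePoint_preimage (S : Set (ℤ × ℤ)) :
    volume (nearestLatticePoint ⁻¹' S) = S.encard := by
  rw [← Measure.map_apply measurable_nearestLatticePoint (S.to_countable.measurableSet),
    map_nearestLatticePoint_volume, Measure.count_apply S.to_countable.measurableSet]

lemma encard_le_volume_closedBall {S : Set (ℤ × ℤ)} {R : ℝ}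
    (h : ∀ p ∈ S, ‖latticePoint p‖ ≤ R) :
    S.encard ≤ volume (closedBall (0 : ℂ) (R + √2 / 2)) := by
  rw [← volume_nearestLatticePoint_preimage]
  refine measure_mono fun z hz => ?_
  rw [mem_closedBall, add_comm]
  calc dist z 0
      ≤ dist z (latticePoint (nearestLatticePoint z)) + dist (latticePoint (nearestLatticePoint z)) 0 :=
        dist_triangle ..
    _ ≤ √2 / 2 + R :=
        add_le_add (dist_latticePoint_nearestLatticePoint_le z) (by simpa using h _ hz)

lemma volume_closedBall_le_encard {S : Set (ℤ × ℤ)} {R : ℝ}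
    (h : ∀ p, ‖latticePoint p‖ ≤ R → p ∈ S) :
    volume (closedBall (0 : ℂ) (R - √2 / 2)) ≤ S.encard := by
  rw [← volume_nearestLatticePoint_preimage]
  refine measure_mono fun z hz => h _ ?_
  rw [mem_closedBall] at hz
  rw [← dist_zero_right]
  calc dist (latticePoint (nearestLatticePoint z)) 0
      ≤ dist (latticePoint (nearestLatticePoint z)) z + dist z 0 := dist_triangle ..
    _ ≤ √2 / 2 + (R - √2 / 2) := by
        rw [dist_comm]; exact add_le_add (dist_latticePoint_nearestLatticePoint_le z) hz
    _ = R := by ring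

lemma norm_latticePoint_le_iff {p : ℤ × ℤ} {r : ℝ} (hr : 0 ≤ r) :
    ‖latticePoint p‖ ≤ r ↔ (p.1 : ℝ) ^ 2 + (p.2 : ℝ) ^ 2 ≤ r ^ 2 := by
  rw [← sq_le_sq₀ (norm_nonneg _) hr, Complex.sq_norm, Complex.normSq_apply]
  simp [latticePoint, sq]

lemma volume_closedBall_zero {ρ : ℝ} (hρ : 0 ≤ ρ) :
    volume (closedBall (0 : ℂ) ρ) = ENNReal.ofReal (Real.pi * ρ ^ 2) := by
  rw [Complex.volume_closedBall, ENNReal.ofReal_mul Real.pi_pos.le, mul_comm,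
    ENNReal.ofReal_pow hρ, ← NNReal.coe_real_pi, ENNReal.ofReal_coe_nnreal]

def latticePointsInDisk (r : ℝ) : Set (ℤ × ℤ) := {p | ‖latticePoint p‖ ≤ r}

lemma C_eq_ncard_latticePointsInDisk {r : ℝ} (hr : 0 ≤ r) :
    C r = (latticePointsInDisk r).ncard := by
  simp only [C, latticePointsInDisk, norm_latticePoint_le_iff hr]
  rfl

lemma finite_latticePointsInDisk (r : ℝ) : (latticePointsInDisk r).Finite := by
  refine Set.encard_lt_top_iff.1 (ENat.toENNReal_lt_top.1 ?_)
  exact (encard_le_volume_closedBall fun _ hp => hp).trans_lt measure_closedBall_lt_top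

lemma C_le_pi_mul_add_sq {r : ℝ} (hr : 0 ≤ r) :
    (C r : ℝ) ≤ Real.pi * (r + √2 / 2) ^ 2 := by
  have hle := encard_le_volume_closedBall (S := latticePointsInDisk r) fun _ hp => hp
  rw [volume_closedBall_zero (by positivity), ← (finite_latticePointsInDisk r).cast_ncard_eq,
    ← C_eq_ncard_latticePointsInDisk hr] at hle
  exact (ENNReal.ofReal_le_ofReal_iff (by positivity)).1 (by simpa using hle)

lemma pi_mul_sub_sq_le_C {r : ℝ} (hr : √2 / 2 ≤ r) :
    Real.pi * (r - √2 / 2) ^ 2 ≤ C r := by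
  have hle := volume_closedBall_le_encard (S := latticePointsInDisk r) fun _ hp => hp
  rw [volume_closedBall_zero (by linarith), ← (finite_latticePointsInDisk r).cast_ncard_eq,
    ← C_eq_ncard_latticePointsInDisk ((by positivity : (0 : ℝ) ≤ √2 / 2).trans hr)] at hle
  exact (ENNReal.ofReal_le_ofReal_iff (by positivity)).1 (by simpa using hle)

theorem gauss_circle_error_bound (r : ℝ) (hr : 0 ≤ r) :
    |(C r : ℝ) - Real.pi * r ^ 2| < 2 * Real.sqrt 2 * Real.pi * r + 2 * Real.pi := by
  have h2 : √2 ^ 2 = 2 := Real.sq_sqrt zero_le_two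
  have hplus : Real.pi * (r + √2 / 2) ^ 2 = Real.pi * r ^ 2 + √2 * Real.pi * r + Real.pi / 2 := by
    linear_combination Real.pi / 4 * h2
  have hminus : Real.pi * (r - √2 / 2) ^ 2 = Real.pi * r ^ 2 - √2 * Real.pi * r + Real.pi / 2 := by
    linear_combination Real.pi / 4 * h2
  have hpi := Real.pi_pos
  have hterm : 0 ≤ √2 * Real.pi * r := by positivity
  rw [abs_lt]
  refine ⟨?_, by linarith [C_le_pi_mul_add_sq hr]⟩
  by_cases hr2 : √2 / 2 ≤ r
  · linarith [pi_mul_sub_sq_le_C hr2]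
  · have hsmall : Real.pi * r ^ 2 ≤ Real.pi * (√2 / 2) ^ 2 := by gcongr; linarith
    linarith [(C r).cast_nonneg (α := ℝ)]
end

section
/- (Gauss, 1834) The function x ↦ C(√x) − πx is O(√x) as x → ∞; that is, there exists a constant K > 0 such that for all sufficiently large real x, |C(√x) − πx| ≤ K·√x. -/
open MeasureTheory Set Metric Real

lemma Complex.measureReal_closedBall (a : ℂ) {r : ℝ} (hr : 0 ≤ r) :
    volume.real (closedBall a r) = π * r ^ 2 := by
  simp [measureReal_def, ENNReal.toReal_ofReal hr, mul_comm]

namespace GaussCircle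

def latticePoint (p : ℤ × ℤ) : ℂ := ⟨p.1, p.2⟩

lemma norm_latticePoint_sq (p : ℤ × ℤ) :
    ‖latticePoint p‖ ^ 2 = (p.1 : ℝ) ^ 2 + (p.2 : ℝ) ^ 2 := by
  rw [Complex.sq_norm, latticePoint, Complex.normSq_mk]
  ring

def latticePointsIn (r : ℝ) : Set (ℤ × ℤ) := latticePoint ⁻¹' closedBall 0 r

lemma mem_latticePointsIn {r : ℝ} {p : ℤ × ℤ} :
    p ∈ latticePointsIn r ↔ ‖latticePoint p‖ ≤ r :=
  mem_closedBall_zero_iff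

lemma finite_latticePointsIn (r : ℝ) : (latticePointsIn r).Finite := by
  refine (finite_Icc (-⌈r⌉, -⌈r⌉) (⌈r⌉, ⌈r⌉)).subset fun p hp ↦ ?_
  rw [mem_latticePointsIn] at hp
  have h1 : |(p.1 : ℝ)| ≤ ⌈r⌉ := (Complex.abs_re_le_norm _).trans (hp.trans (Int.le_ceil r))
  have h2 : |(p.2 : ℝ)| ≤ ⌈r⌉ := (Complex.abs_im_le_norm _).trans (hp.trans (Int.le_ceil r))
  rw [abs_le] at h1 h2
  exact ⟨⟨by exact_mod_cast h1.1, by exact_mod_cast h2.1⟩,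
    ⟨by exact_mod_cast h1.2, by exact_mod_cast h2.2⟩⟩

lemma C_eq_ncard_latticePointsIn {r : ℝ} (hr : 0 ≤ r) : C r = (latticePointsIn r).ncard := by
  rw [C, ← Nat.card_coe_set_eq]
  congr! 3 with p
  rw [mem_latticePointsIn, ← pow_le_pow_iff_left₀ (norm_nonneg _) hr two_ne_zero,
    norm_latticePoint_sq]

noncomputable def floorPoint (z : ℂ) : ℤ × ℤ := (⌊z.re⌋, ⌊z.im⌋)

lemma floorPoint_preimage_singleton (p : ℤ × ℤ) :
    floorPoint ⁻¹' {p} = Complex.measurableEquivRealProd ⁻¹'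
      (Ico (p.1 : ℝ) (p.1 + 1) ×ˢ Ico (p.2 : ℝ) (p.2 + 1)) := by
  ext z
  simp [floorPoint, Prod.ext_iff, Int.floor_eq_iff]

lemma measurableSet_floorPoint_preimage_singleton (p : ℤ × ℤ) :
    MeasurableSet (floorPoint ⁻¹' {p}) := by
  rw [floorPoint_preimage_singleton]
  exact (measurableSet_Ico.prod measurableSet_Ico).preimage
    Complex.measurableEquivRealProd.measurable

lemma volume_floorPoint_preimage_singleton (p : ℤ × ℤ) :
    volume (floorPoint ⁻¹' {p}) = 1 := by
  rw [floorPoint_preimage_singleton, Complex.volume_preserving_equiv_real_prod.measure_preimage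
    (measurableSet_Ico.prod measurableSet_Ico).nullMeasurableSet, Measure.volume_eq_prod,
    Measure.prod_prod]
  simp

lemma volume_floorPoint_preimage (s : Finset (ℤ × ℤ)) :
    volume (floorPoint ⁻¹' s) = s.card := by
  rw [← sum_measure_preimage_singleton s
    fun p _ ↦ measurableSet_floorPoint_preimage_singleton p]
  simp [volume_floorPoint_preimage_singleton]

lemma norm_sub_latticePoint_floorPoint_le (z : ℂ) :
    ‖z - latticePoint (floorPoint z)‖ ≤ √2 := by
  rw [Complex.norm_def, Complex.normSq_apply]
  apply sqrt_le_sqrt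
  have hre : (z - latticePoint (floorPoint z)).re = Int.fract z.re := rfl
  have him : (z - latticePoint (floorPoint z)).im = Int.fract z.im := rfl
  rw [hre, him]
  nlinarith [Int.fract_nonneg z.re, Int.fract_lt_one z.re,
    Int.fract_nonneg z.im, Int.fract_lt_one z.im]

lemma floorPoint_preimage_latticePointsIn_subset (r : ℝ) :
    floorPoint ⁻¹' latticePointsIn r ⊆ closedBall 0 (r + √2) := fun z hz ↦ by
  rw [mem_closedBall_zero_iff]
  calc ‖z‖ ≤ ‖latticePoint (floorPoint z)‖ + ‖z - latticePoint (floorPoint z)‖ :=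
        norm_le_norm_add_norm_sub' _ _
    _ ≤ r + √2 := add_le_add (mem_latticePointsIn.mp hz) (norm_sub_latticePoint_floorPoint_le z)

lemma closedBall_subset_floorPoint_preimage_latticePointsIn (r : ℝ) :
    closedBall 0 (r - √2) ⊆ floorPoint ⁻¹' latticePointsIn r := fun z hz ↦ by
  rw [mem_closedBall_zero_iff] at hz
  rw [mem_preimage, mem_latticePointsIn]
  calc ‖latticePoint (floorPoint z)‖ ≤ ‖z‖ + ‖z - latticePoint (floorPoint z)‖ :=
        norm_le_norm_add_norm_sub _ _
    _ ≤ r - √2 + √2 := add_le_add hz (norm_sub_latticePoint_floorPoint_le z)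
    _ = r := sub_add_cancel r √2

lemma measureReal_floorPoint_preimage_latticePointsIn {r : ℝ} (hr : 0 ≤ r) :
    volume.real (floorPoint ⁻¹' latticePointsIn r) = C r := by
  have hfin := finite_latticePointsIn r
  rw [measureReal_def, ← hfin.coe_toFinset, volume_floorPoint_preimage,
    C_eq_ncard_latticePointsIn hr, ncard_eq_toFinset_card _ hfin]
  rfl

lemma C_le_pi_mul_add_sqrt_two_sq {r : ℝ} (hr : 0 ≤ r) :
    (C r : ℝ) ≤ π * (r + √2) ^ 2 := by
  rw [← measureReal_floorPoint_preimage_latticePointsIn hr,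
    ← Complex.measureReal_closedBall 0 (by positivity)]
  exact measureReal_mono (floorPoint_preimage_latticePointsIn_subset r)
    measure_closedBall_lt_top.ne

lemma pi_mul_sub_sqrt_two_sq_le_C {r : ℝ} (hr : √2 ≤ r) : π * (r - √2) ^ 2 ≤ C r := by
  rw [← measureReal_floorPoint_preimage_latticePointsIn ((sqrt_nonneg 2).trans hr),
    ← Complex.measureReal_closedBall 0 (sub_nonneg.mpr hr)]
  refine measureReal_mono (closedBall_subset_floorPoint_preimage_latticePointsIn r) ?_
  exact ne_top_of_le_ne_top measure_closedBall_lt_top.ne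
    (measure_mono (floorPoint_preimage_latticePointsIn_subset r))

lemma abs_C_sub_pi_mul_sq_le {r : ℝ} (hr : √2 ≤ r) :
    |(C r : ℝ) - π * r ^ 2| ≤ π * (2 * √2 * r + 2) := by
  have hsqrt : √2 ^ 2 = 2 := sq_sqrt zero_le_two
  have hpi := pi_pos
  have hupper := C_le_pi_mul_add_sqrt_two_sq ((sqrt_nonneg 2).trans hr)
  have hlower := pi_mul_sub_sqrt_two_sq_le_C hr
  rw [abs_le]
  constructor <;> nlinarith

end GaussCircle

theorem gauss_circle_error_bigO_gauss :
    ∃ K : ℝ, 0 < K ∧ ∀ᶠ x : ℝ in Filter.atTop,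
      |(C (Real.sqrt x) : ℝ) - Real.pi * x| ≤ K * Real.sqrt x := by
  refine ⟨π * (2 * √2 + 2), by positivity, ?_⟩
  filter_upwards [Filter.eventually_ge_atTop 2] with x hx
  have hr : √2 ≤ √x := sqrt_le_sqrt hx
  have hr1 : 1 ≤ √x := one_le_sqrt.mpr (by linarith)
  calc |(C √x : ℝ) - π * x| = |(C √x : ℝ) - π * √x ^ 2| := by rw [sq_sqrt (by linarith)]
    _ ≤ π * (2 * √2 * √x + 2) := GaussCircle.abs_C_sub_pi_mul_sq_le hr
    _ ≤ π * (2 * √2 + 2) * √x := by nlinarith [pi_pos]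
end
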